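/- Let {X_k}_{k≥1} be a sequence of independent nonnegative random variables and (a_k)_{k≥1} a monotonically increasing sequence of reals with a_k/k → ∞. Suppose ∑_{k≥1} sup_{n≥1} P[X_n > a_k] < ∞ and E[X_{k₀}] = ∞ for some k₀. If {X*_k}_{k≥1} are i.i.d. nonnegative random variables with P[X*_k > x] = sup_{n≥1} P[X_n > x] for all x, then E[X*_1] = ∞, ∑_{k≥1} P[X*_k > a_k] < ∞, and P[∑_{k=1}^n X_k > a_n for infinitely many n] ≤ P[∑_{k=1}^n X*_k > a_n for infinitely many n]. -/

import Mathlib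

/-!
Tail domination `μ (x, ∞) ≤ ν (x, ∞)` passes to every upper set of `ℝ` (such a set is `[c, ∞)` or
`(c, ∞)`, and `[c, ∞)` is the decreasing limit of `(c - r, ∞)`), hence, by the layer-cake formula,
to integrals of monotone functions, and then, integrating one coordinate at a time, to product
measures and monotone functions of finitely many coordinates. By hypothesis the law of every `X k`
is dominated by that of every `X* j`. This gives `E[X* 0] ≥ E[X k₀] = ∞`; and since "some partial
sum `S n` with `N ≤ n ≤ M` exceeds `a n`" is an increasing event in finitely many independent
coordinates, the two `limsup` events compare by continuity of measure. The summability is the tail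
identity itself.
-/

open MeasureTheory ProbabilityTheory Filter Set
open scoped ENNReal Topology

def StochasticallyLE (μ ν : Measure ℝ) : Prop :=
  ∀ x, μ (Ioi x) ≤ ν (Ioi x)

namespace StochasticallyLE

variable {μ ν : Measure ℝ}

theorem measure_Ici_le [IsFiniteMeasure ν] (h : StochasticallyLE μ ν) (c : ℝ) :
    μ (Ici c) ≤ ν (Ici c) := by
  have hIci : ⋂ r > (0 : ℝ), Ioi (c - r) = Ici c := by
    ext x
    simp only [mem_iInter, mem_Ioi, mem_Ici, sub_lt_comm]
    exact ⟨fun hx => le_of_forall_pos_lt_add fun r hr => by linarith [hx r hr],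
      fun hx r hr => by linarith⟩
  have hlim : Tendsto (fun r => ν (Ioi (c - r))) (𝓝[>] 0) (𝓝 (ν (Ici c))) := by
    rw [← hIci]
    exact tendsto_measure_biInter_gt (fun _ _ => measurableSet_Ioi.nullMeasurableSet)
      (fun i j _ hij => Ioi_subset_Ioi (by linarith)) ⟨1, one_pos, measure_ne_top _ _⟩
  refine ge_of_tendsto hlim (eventually_nhdsWithin_of_forall fun r (hr : 0 < r) => ?_)
  exact (measure_mono (Ici_subset_Ioi.2 (by linarith))).trans (h _)

theorem measure_le_of_isUpperSet [IsProbabilityMeasure μ] [IsProbabilityMeasure ν]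
    (h : StochasticallyLE μ ν) {U : Set ℝ} (hU : IsUpperSet U) : μ U ≤ ν U := by
  rcases U.eq_empty_or_nonempty with rfl | hne
  · simp
  by_cases hbdd : BddBelow U
  · have hIoi : Ioi (sInf U) ⊆ U := fun x hx => by
      obtain ⟨u, hu, hux⟩ := (csInf_lt_iff hbdd hne).1 hx
      exact hU hux.le hu
    rcases mem_Ici_Ioi_of_subset_of_subset hIoi fun x hx => csInf_le hbdd hx with hU' | hU'
    · rw [hU']; exact h.measure_Ici_le _
    · rw [hU']; exact h _
  · have : U = univ := eq_univ_of_forall fun x => by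
      obtain ⟨u, hu, hux⟩ := not_bddBelow_iff.1 hbdd x
      exact hU hux.le hu
    simp [this]

theorem lintegral_le_of_monotone [IsProbabilityMeasure μ] [IsProbabilityMeasure ν]
    (h : StochasticallyLE μ ν) {g : ℝ → ℝ≥0∞} (hg : Monotone g) :
    ∫⁻ x, g x ∂μ ≤ ∫⁻ x, g x ∂ν := by
  -- The layer-cake formula needs finite values: truncate at `n`, then let `n → ∞`.
  have htrunc : ∀ n : ℕ, ∫⁻ x, min (g x) n ∂μ ≤ ∫⁻ x, min (g x) n ∂ν := by
    intro n
    set f : ℝ → ℝ := fun x => (min (g x) n).toReal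
    have hf : Monotone f := fun x y hxy =>
      ENNReal.toReal_mono (by simp) (min_le_min_right _ (hg hxy))
    have layer_cake : ∀ κ : Measure ℝ,
        ∫⁻ x, min (g x) n ∂κ = ∫⁻ t in Ioi 0, κ {x | t < f x} := fun κ => by
      rw [← lintegral_eq_lintegral_meas_lt κ (ae_of_all _ fun _ => ENNReal.toReal_nonneg)
        hf.measurable.aemeasurable]
      exact lintegral_congr fun x => (ENNReal.ofReal_toReal (by simp)).symm
    rw [layer_cake μ, layer_cake ν]
    exact lintegral_mono fun t =>
      h.measure_le_of_isUpperSet fun x y hxy hx => hx.trans_le (hf hxy)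
  have hsup : ∀ x, g x = ⨆ n : ℕ, min (g x) n := fun x => by
    rw [← inf_iSup_eq, ENNReal.iSup_natCast, inf_top_eq]
  have hmono : Monotone fun (n : ℕ) x => min (g x) n := fun m n hmn x =>
    min_le_min_left _ (by exact_mod_cast hmn)
  have hmeas : ∀ n : ℕ, Measurable fun x => min (g x) n := fun n =>
    hg.measurable.min measurable_const
  rw [funext hsup, lintegral_iSup hmeas hmono, lintegral_iSup hmeas hmono]
  exact iSup_mono htrunc

end StochasticallyLE

theorem lintegral_pi_fin_succ {α : Type*} [MeasurableSpace α] {n : ℕ}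
    (κ : Fin (n + 1) → Measure α) [∀ i, SigmaFinite (κ i)] {f : (Fin (n + 1) → α) → ℝ≥0∞}
    (hf : Measurable f) :
    ∫⁻ x, f x ∂Measure.pi κ =
      ∫⁻ x₀, ∫⁻ x, f (Fin.cons x₀ x) ∂Measure.pi (fun i => κ i.succ) ∂κ 0 := by
  have e := measurePreserving_piFinSuccAbove κ 0
  rw [← e.symm.lintegral_comp_emb (MeasurableEquiv.measurableEmbedding _),
    lintegral_prod _ (by fun_prop)]
  simp only [MeasurableEquiv.piFinSuccAbove_symm_apply, Fin.insertNthEquiv_zero,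
    Fin.succAbove_zero]
  rfl

theorem lintegral_pi_le_of_stochasticallyLE :
    ∀ {m : ℕ} {μ ν : Fin m → Measure ℝ} [∀ i, IsProbabilityMeasure (μ i)]
      [∀ i, IsProbabilityMeasure (ν i)], (∀ i, StochasticallyLE (μ i) (ν i)) →
      ∀ {f : (Fin m → ℝ) → ℝ≥0∞}, Measurable f → Monotone f →
      ∫⁻ x, f x ∂Measure.pi μ ≤ ∫⁻ x, f x ∂Measure.pi ν
  | 0, μ, ν, _, _, _, f, _, _ => by rw [Measure.pi_of_empty μ, Measure.pi_of_empty ν]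
  | m + 1, μ, ν, _, _, h, f, hf, hf_mono => by
    have hcons : ∀ x₀ : ℝ, Measurable fun x : Fin m → ℝ => f (Fin.cons x₀ x) := fun x₀ =>
      hf.comp <| measurable_pi_iff.2 fun i => Fin.cases measurable_const measurable_pi_apply i
    rw [lintegral_pi_fin_succ μ hf, lintegral_pi_fin_succ ν hf]
    calc ∫⁻ x₀, ∫⁻ x, f (Fin.cons x₀ x) ∂Measure.pi (fun i => μ i.succ) ∂μ 0
        ≤ ∫⁻ x₀, ∫⁻ x, f (Fin.cons x₀ x) ∂Measure.pi (fun i => ν i.succ) ∂μ 0 :=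
          lintegral_mono fun x₀ => lintegral_pi_le_of_stochasticallyLE (fun i => h i.succ)
            (hcons x₀) fun x y hxy => hf_mono (Fin.cons_le_cons.2 ⟨le_rfl, hxy⟩)
      _ ≤ _ := (h 0).lintegral_le_of_monotone fun x₀ y₀ hxy =>
          lintegral_mono fun x => hf_mono (Fin.cons_le_cons.2 ⟨hxy, le_rfl⟩)

theorem measure_pi_le_of_isUpperSet {m : ℕ} {μ ν : Fin m → Measure ℝ}
    [∀ i, IsProbabilityMeasure (μ i)] [∀ i, IsProbabilityMeasure (ν i)]
    (h : ∀ i, StochasticallyLE (μ i) (ν i)) {D : Set (Fin m → ℝ)} (hD : MeasurableSet D)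
    (hU : IsUpperSet D) : Measure.pi μ D ≤ Measure.pi ν D := by
  have hmono : Monotone (D.indicator 1 : (Fin m → ℝ) → ℝ≥0∞) := fun x y hxy => by
    by_cases hx : x ∈ D
    · simp [hx, hU hxy hx]
    · simp [hx]
  simpa [lintegral_indicator_one hD] using
    lintegral_pi_le_of_stochasticallyLE h (measurable_one.indicator hD) hmono

def partialSumExceedSet (a : ℕ → ℝ) (N M : ℕ) : Set (Fin M → ℝ) :=
  {x | ∃ n, ∃ hn : n ≤ M, N ≤ n ∧ a n < ∑ k : Fin n, x (Fin.castLE hn k)}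

theorem measurableSet_partialSumExceedSet (a : ℕ → ℝ) (N M : ℕ) :
    MeasurableSet (partialSumExceedSet a N M) := by
  refine measurableSet_setOfPred.2 <| Measurable.exists fun n => Measurable.exists fun hn =>
    measurable_const.and <| measurableSet_setOfPred.1 <| measurableSet_lt measurable_const ?_
  fun_prop

theorem isUpperSet_partialSumExceedSet (a : ℕ → ℝ) (N M : ℕ) :
    IsUpperSet (partialSumExceedSet a N M) := fun _ _ hxy ⟨n, hn, hN, hlt⟩ =>
  ⟨n, hn, hN, hlt.trans_le (Finset.sum_le_sum fun _ _ => hxy _)⟩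

theorem setOf_exists_lt_partialSum_eq {Ω : Type*} (Z : ℕ → Ω → ℝ) (a : ℕ → ℝ) (N M : ℕ) :
    {ω | ∃ n ∈ Finset.Icc N M, a n < ∑ k ∈ Finset.range n, Z k ω} =
      (fun ω (i : Fin M) => Z i ω) ⁻¹' partialSumExceedSet a N M := by
  ext ω
  simp only [mem_ofPred_eq, partialSumExceedSet, Finset.mem_Icc, Finset.sum_range]
  exact exists_congr fun n =>
    ⟨fun ⟨⟨hN, hM⟩, hlt⟩ => ⟨hM, hN, hlt⟩, fun ⟨hM, hN, hlt⟩ => ⟨⟨hN, hM⟩, hlt⟩⟩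

theorem setOf_exists_ge_eq_iUnion {γ : Type*} (r : ℕ → γ → Prop) (N : ℕ) :
    {z | ∃ n ≥ N, r n z} = ⋃ M, {z | ∃ n ∈ Finset.Icc N M, r n z} := by
  ext z
  simp only [mem_ofPred_eq, mem_iUnion, Finset.mem_Icc]
  exact ⟨fun ⟨n, hn, hr⟩ => ⟨n, n, ⟨hn, le_rfl⟩, hr⟩, fun ⟨_, n, ⟨hn, _⟩, hr⟩ => ⟨n, hn, hr⟩⟩

theorem monotone_setOf_exists_mem_Icc {γ : Type*} (r : ℕ → γ → Prop) (N : ℕ) :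
    Monotone fun M => {z | ∃ n ∈ Finset.Icc N M, r n z} := fun _ _ hM _ ⟨n, hn, hr⟩ =>
  ⟨n, Finset.Icc_subset_Icc_right hM hn, hr⟩

theorem setOf_frequently_atTop_eq_iInter {γ : Type*} (r : ℕ → γ → Prop) :
    {z | ∃ᶠ n in atTop, r n z} = ⋂ N, {z | ∃ n ≥ N, r n z} := by
  ext z
  simp [frequently_atTop]

theorem measure_setOf_frequently_le {α β : Type*} [MeasurableSpace α] [MeasurableSpace β]
    {μ : Measure α} {ν : Measure β} [IsFiniteMeasure ν] {p : ℕ → α → Prop} {q : ℕ → β → Prop}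
    (hq : ∀ n, MeasurableSet {y | q n y})
    (h : ∀ N M, μ {x | ∃ n ∈ Finset.Icc N M, p n x} ≤ ν {y | ∃ n ∈ Finset.Icc N M, q n y}) :
    μ {x | ∃ᶠ n in atTop, p n x} ≤ ν {y | ∃ᶠ n in atTop, q n y} := by
  have hanti : Antitone fun N => {y | ∃ n ≥ N, q n y} := fun _ _ hN _ ⟨n, hn, hq⟩ =>
    ⟨n, hN.trans hn, hq⟩
  have hmeas : ∀ N, MeasurableSet {y | ∃ n ≥ N, q n y} := fun N =>
    measurableSet_setOfPred.2 <| Measurable.exists fun n =>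
      measurable_const.and (measurableSet_setOfPred.1 (hq n))
  rw [setOf_frequently_atTop_eq_iInter, setOf_frequently_atTop_eq_iInter,
    hanti.measure_iInter (fun N => (hmeas N).nullMeasurableSet) ⟨0, measure_ne_top _ _⟩]
  refine le_iInf fun N => (measure_mono (iInter_subset _ N)).trans ?_
  rw [setOf_exists_ge_eq_iUnion, setOf_exists_ge_eq_iUnion,
    (monotone_setOf_exists_mem_Icc p N).measure_iUnion,
    (monotone_setOf_exists_mem_Icc q N).measure_iUnion]
  exact iSup_mono (h N)

section Independent

variable {Ω Ω' : Type*} [MeasurableSpace Ω] [MeasurableSpace Ω'] {P : Measure Ω}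
  {Q : Measure Ω'} [IsProbabilityMeasure P] [IsProbabilityMeasure Q]

theorem measure_preimage_le_of_iIndepFun_of_isUpperSet {m : ℕ} {X : Fin m → Ω → ℝ}
    {Y : Fin m → Ω' → ℝ}
    (hX : ∀ i, Measurable (X i)) (hY : ∀ i, Measurable (Y i)) (hX_indep : iIndepFun X P)
    (hY_indep : iIndepFun Y Q) (h : ∀ i, StochasticallyLE (P.map (X i)) (Q.map (Y i)))
    {D : Set (Fin m → ℝ)} (hD : MeasurableSet D) (hU : IsUpperSet D) :
    P ((fun ω i => X i ω) ⁻¹' D) ≤ Q ((fun ω i => Y i ω) ⁻¹' D) := by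
  have := fun i => Measure.isProbabilityMeasure_map (μ := P) (hX i).aemeasurable
  have := fun i => Measure.isProbabilityMeasure_map (μ := Q) (hY i).aemeasurable
  rw [← Measure.map_apply (measurable_pi_lambda _ hX) hD,
    ← Measure.map_apply (measurable_pi_lambda _ hY) hD,
    hX_indep.map_fun_eq_pi_map fun i => (hX i).aemeasurable,
    hY_indep.map_fun_eq_pi_map fun i => (hY i).aemeasurable]
  exact measure_pi_le_of_isUpperSet h hD hU

theorem measure_exists_lt_partialSum_le {X : ℕ → Ω → ℝ} {Y : ℕ → Ω' → ℝ}
    (hX : ∀ k, Measurable (X k)) (hY : ∀ k, Measurable (Y k)) (hX_indep : iIndepFun X P)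
    (hY_indep : iIndepFun Y Q) (h : ∀ k, StochasticallyLE (P.map (X k)) (Q.map (Y k)))
    (a : ℕ → ℝ) (N M : ℕ) :
    P {ω | ∃ n ∈ Finset.Icc N M, a n < ∑ k ∈ Finset.range n, X k ω} ≤
      Q {ω | ∃ n ∈ Finset.Icc N M, a n < ∑ k ∈ Finset.range n, Y k ω} := by
  rw [setOf_exists_lt_partialSum_eq, setOf_exists_lt_partialSum_eq]
  exact measure_preimage_le_of_iIndepFun_of_isUpperSet (fun i => hX i) (fun i => hY i)
    (hX_indep.precomp Fin.val_injective) (hY_indep.precomp Fin.val_injective) (fun i => h i)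
    (measurableSet_partialSumExceedSet a N M) (isUpperSet_partialSumExceedSet a N M)

end Independent

theorem stmt4_general
    {Ω : Type*} [MeasurableSpace Ω] (P : Measure Ω) [IsProbabilityMeasure P]
    (X : ℕ → Ω → ℝ) (hX_meas : ∀ k, Measurable (X k))
    (h_indep : iIndepFun X P)
    (a : ℕ → ℝ)
    (h_sum : ∑' k : ℕ, ⨆ n, P {ω | a k < X n ω} < ∞)
    (k₀ : ℕ) (h_inf : ∫⁻ ω, ENNReal.ofReal (X k₀ ω) ∂P = ∞)
    (Xstar : ℕ → Ω → ℝ) (hXs_meas : ∀ k, Measurable (Xstar k))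
    (h_indep_s : iIndepFun Xstar P)
    (h_tail : ∀ k x, P {ω | x < Xstar k ω} = ⨆ n, P {ω | x < X n ω}) :
    (∫⁻ ω, ENNReal.ofReal (Xstar 0 ω) ∂P = ∞) ∧
    (∑' k : ℕ, P {ω | a k < Xstar k ω} < ∞) ∧
    P {ω | ∃ᶠ n in atTop, a n < ∑ k ∈ Finset.range n, X k ω}
      ≤ P {ω | ∃ᶠ n in atTop, a n < ∑ k ∈ Finset.range n, Xstar k ω} := by
  have hdom : ∀ k j, StochasticallyLE (P.map (X k)) (P.map (Xstar j)) := fun k j x => by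
    rw [Measure.map_apply (hX_meas k) measurableSet_Ioi,
      Measure.map_apply (hXs_meas j) measurableSet_Ioi]
    exact (le_iSup (fun n => P {ω | x < X n ω}) k).trans (h_tail j x).ge
  have := Measure.isProbabilityMeasure_map (μ := P) (hX_meas k₀).aemeasurable
  have := Measure.isProbabilityMeasure_map (μ := P) (hXs_meas 0).aemeasurable
  refine ⟨?_, (tsum_congr fun k => h_tail k (a k)).trans_lt h_sum, ?_⟩
  · refine top_unique (h_inf.symm.trans_le ?_)
    rw [← lintegral_map ENNReal.measurable_ofReal (hX_meas k₀),
      ← lintegral_map ENNReal.measurable_ofReal (hXs_meas 0)]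
    exact (hdom k₀ 0).lintegral_le_of_monotone ENNReal.ofReal_mono
  · refine measure_setOf_frequently_le (fun n => measurableSet_lt measurable_const
      (Finset.measurable_sum _ fun k _ => hXs_meas k)) fun N M => ?_
    exact measure_exists_lt_partialSum_le hX_meas hXs_meas h_indep h_indep_s
      (fun k => hdom k k) a N M

theorem stmt4
    {Ω : Type*} [MeasurableSpace Ω] (P : Measure Ω) [IsProbabilityMeasure P]
    (X : ℕ → Ω → ℝ) (hX_meas : ∀ k, Measurable (X k)) (hX_nonneg : ∀ k ω, 0 ≤ X k ω)
    (h_indep : iIndepFun X P)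
    (a : ℕ → ℝ) (ha_mono : Monotone a)
    (ha_div : Tendsto (fun k : ℕ => a k / k) atTop atTop)
    (h_sum : ∑' k : ℕ, ⨆ n, P {ω | a k < X n ω} < ∞)
    (k₀ : ℕ) (h_inf : ∫⁻ ω, ENNReal.ofReal (X k₀ ω) ∂P = ∞)
    (Xstar : ℕ → Ω → ℝ) (hXs_meas : ∀ k, Measurable (Xstar k))
    (hXs_nonneg : ∀ k ω, 0 ≤ Xstar k ω)
    (h_indep_s : iIndepFun Xstar P)
    (h_ident : ∀ k, Measure.map (Xstar k) P = Measure.map (Xstar 0) P)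
    (h_tail : ∀ k x, P {ω | x < Xstar k ω} = ⨆ n, P {ω | x < X n ω}) :
    (∫⁻ ω, ENNReal.ofReal (Xstar 0 ω) ∂P = ∞) ∧
    (∑' k : ℕ, P {ω | a k < Xstar k ω} < ∞) ∧
    P {ω | ∃ᶠ n in atTop, a n < ∑ k ∈ Finset.range n, X k ω}
      ≤ P {ω | ∃ᶠ n in atTop, a n < ∑ k ∈ Finset.range n, Xstar k ω} :=
  stmt4_general P X hX_meas h_indep a h_sum k₀ h_inf Xstar hXs_meas h_indep_s h_tail
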